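/- arXiv:1403.5961 — 4 statements merged into one kernel-verified Lean document; each statement's English description precedes it below -/
import Mathlib

section
/- Let G be a cograph. If G contains an induced P3 and an induced 2K3, then G contains an induced subgraph isomorphic to 2K3 ∪ P3, to K3 ∪ diamond, to K3 ∪ paw, or to K1 ⊕ 2K3. -/
open SimpleGraph

/-- The disjoint union `G ∪ H` of two vertex-disjoint graphs. -/
def gUnion {α β : Type*} (G : SimpleGraph α) (H : SimpleGraph β) : SimpleGraph (α ⊕ β) where
  Adj x y :=
    match x, y with
    | Sum.inl a, Sum.inl b => G.Adj a b
    | Sum.inr a, Sum.inr b => H.Adj a b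
    | _, _ => False
  symm := by constructor; rintro (a | a) (b | b) h
             · exact G.adj_symm h
             · exact h.elim
             · exact h.elim
             · exact H.adj_symm h
  loopless := by constructor; rintro (a | a) h
                 · exact G.loopless.irrefl a h
                 · exact H.loopless.irrefl a h

/-- The join `G ⊕ H` of two vertex-disjoint graphs: disjoint union plus all edges across. -/
def gJoin {α β : Type*} (G : SimpleGraph α) (H : SimpleGraph β) : SimpleGraph (α ⊕ β) where
  Adj x y :=
    match x, y with
    | Sum.inl a, Sum.inl b => G.Adj a b
    | Sum.inr a, Sum.inr b => H.Adj a b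
    | _, _ => True
  symm := by constructor; rintro (a | a) (b | b) h
             · exact G.adj_symm h
             · trivial
             · trivial
             · exact H.adj_symm h
  loopless := by constructor; rintro (a | a) h
                 · exact G.loopless.irrefl a h
                 · exact H.loopless.irrefl a h

/-- The complete graph `Kₙ`. -/
def KG (n : ℕ) : SimpleGraph (Fin n) := ⊤

/-- The edgeless graph `nK₁` on `n` vertices. -/
def EG (n : ℕ) : SimpleGraph (Fin n) := ⊥

/-- `G` contains `H`, i.e. `H` is isomorphic to an induced subgraph of `G`. -/
def Contains {α β : Type*} (G : SimpleGraph α) (H : SimpleGraph β) : Prop :=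
  Nonempty (H ↪g G)

/-- A cograph is a `P₄`-free graph. -/
def IsCograph {α : Type*} (G : SimpleGraph α) : Prop :=
  ¬ Contains G (pathGraph 4)

/-- `G` is partitionable: its vertex set splits into a part inducing a triangle-free
graph and a part inducing a `P₃`-free graph. -/
def Partitionable {α : Type*} (G : SimpleGraph α) : Prop :=
  ∃ A : Set α, (G.induce A).CliqueFree 3 ∧ ¬ Contains (G.induce Aᶜ) (pathGraph 3)

/-- `G` is monopolar: its vertex set splits into an independent set and a part
inducing a `P₃`-free graph. -/
def Monopolar {α : Type*} (G : SimpleGraph α) : Prop :=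
  ∃ A : Set α, (G.induce A).CliqueFree 2 ∧ ¬ Contains (G.induce Aᶜ) (pathGraph 3)

/-- `G` is (1,2)-partitionable: its vertex set can be partitioned into at most one
clique and at most two independent sets (equivalently, covered by them). -/
def OneTwoPartitionable {α : Type*} (G : SimpleGraph α) : Prop :=
  ∃ C S₁ S₂ : Set α, C ∪ S₁ ∪ S₂ = Set.univ ∧ G.IsClique C ∧
    (G.induce S₁).CliqueFree 2 ∧ (G.induce S₂).CliqueFree 2

/-- A threshold graph is a `(2K₂, C₄, P₄)`-free graph. -/
def IsThreshold {α : Type*} (G : SimpleGraph α) : Prop :=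
  ¬ Contains G (gUnion (KG 2) (KG 2)) ∧ ¬ Contains G (cycleGraph 4) ∧
    ¬ Contains G (pathGraph 4)

/-- The diamond `K₂ ⊕ 2K₁`. -/
def diamond := gJoin (KG 2) (EG 2)

/-- The paw `K₁ ⊕ (K₁ ∪ K₂)`. -/
def paw := gJoin (KG 1) (gUnion (KG 1) (KG 2))

/-- The butterfly `K₁ ⊕ 2K₂`. -/
def butterfly := gJoin (KG 1) (gUnion (KG 2) (KG 2))

def twoK2 := gUnion (KG 2) (KG 2)

def twoK3 := gUnion (KG 3) (KG 3)

def K2uK1 := gUnion (KG 2) (KG 1)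


/-!
If a vertex has neighbours in both triangles of the induced `2K₃`, then `P₄`-freeness makes it
adjacent to all six vertices, which gives `K₁ ⊕ 2K₃`. Otherwise the two triangles are at distance at
least 3, and in a cograph this survives replacing each triangle by its closed neighbourhood. Since
`P₃` has diameter 2, the induced `P₃` meets at most one of these closed neighbourhoods. If it meets
neither, we have `2K₃ ∪ P₃`. If it meets the one of the first triangle, then it lies, together with
that triangle, outside the closed neighbourhood of the second triangle, and it suffices to find a
paw or a diamond there. In a graph with neither, a vertex on a triangle passes this property on to
its neighbours and has a clique as neighbourhood, so it is never the centre of an induced `P₃`.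
-/

section Development

variable {α β γ : Type*} {G : SimpleGraph α}

def closedNbhd (G : SimpleGraph α) (s : Set α) : Set α := {u | ∃ v ∈ s, u = v ∨ G.Adj v u}

lemma subset_closedNbhd (s : Set α) : s ⊆ closedNbhd G s := fun u hu => ⟨u, hu, Or.inl rfl⟩

lemma mem_closedNbhd_range {ι : Type*} {f : ι → α} {u : α} :
    u ∈ closedNbhd G (Set.range f) ↔ ∃ i, u = f i ∨ G.Adj (f i) u := by
  simp [closedNbhd]

@[simps!]
def kg1Embedding (v : α) : KG 1 ↪g G :=
  ⟨⟨fun _ => v, fun i j _ => Subsingleton.elim i j⟩, by simp [KG]⟩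

@[simps!]
def SimpleGraph.Adj.kg2Embedding {u v : α} (h : G.Adj u v) : KG 2 ↪g G :=
  ⟨⟨![u, v], injective_pair_iff_ne.mpr h.ne⟩, by
    intro i j
    fin_cases i <;> fin_cases j <;> simp [KG, h, h.symm]⟩

@[simps!]
def eg2Embedding {u v : α} (h : ¬ G.Adj u v) (hne : u ≠ v) : EG 2 ↪g G :=
  ⟨⟨![u, v], injective_pair_iff_ne.mpr hne⟩, by
    intro i j
    fin_cases i <;> fin_cases j <;> simp [EG, h, mt G.adj_symm h]⟩

section Glue
variable {H₁ : SimpleGraph β} {H₂ : SimpleGraph γ}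

def gUnion.inl : H₁ ↪g gUnion H₁ H₂ := ⟨Function.Embedding.inl, Iff.rfl⟩
def gUnion.inr : H₂ ↪g gUnion H₁ H₂ := ⟨Function.Embedding.inr, Iff.rfl⟩

@[simps!]
def gUnionEmbedding (f : H₁ ↪g G) (g : H₂ ↪g G)
    (hfg : ∀ j, g j ∉ closedNbhd G (Set.range f)) : gUnion H₁ H₂ ↪g G :=
  have hne : ∀ i j, f i ≠ g j := fun i j h => hfg j ⟨f i, ⟨i, rfl⟩, Or.inl h.symm⟩
  have hadj : ∀ i j, ¬ G.Adj (f i) (g j) := fun i j h => hfg j ⟨f i, ⟨i, rfl⟩, Or.inr h⟩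
  ⟨⟨Sum.elim f g, by
    rintro (i | i) (j | j) h
    exacts [congrArg _ (f.injective h), (hne i j h).elim, (hne j i h.symm).elim,
      congrArg _ (g.injective h)]⟩, by
    rintro (i | i) (j | j)
    exacts [f.map_adj_iff, iff_of_false (hadj i j) id, iff_of_false (fun h => hadj j i h.symm) id,
      g.map_adj_iff]⟩

def gJoinEmbedding (f : H₁ ↪g G) (g : H₂ ↪g G) (hfg : ∀ i j, G.Adj (f i) (g j)) :
    gJoin H₁ H₂ ↪g G :=
  ⟨⟨Sum.elim f g, by
    rintro (i | i) (j | j) h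
    exacts [congrArg _ (f.injective h), ((hfg i j).ne h).elim, ((hfg j i).ne h.symm).elim,
      congrArg _ (g.injective h)]⟩, by
    rintro (i | i) (j | j)
    exacts [f.map_adj_iff, iff_of_true (hfg i j) trivial, iff_of_true (hfg j i).symm trivial,
      g.map_adj_iff]⟩

end Glue

lemma contains_paw {h s u₁ u₂ : α} (hs : G.Adj h s) (hu₁ : G.Adj h u₁) (hu₂ : G.Adj h u₂)
    (hu : G.Adj u₁ u₂) (hsu₁ : ¬ G.Adj s u₁) (hsu₂ : ¬ G.Adj s u₂) (hne₁ : s ≠ u₁)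
    (hne₂ : s ≠ u₂) : Contains G paw :=
  ⟨gJoinEmbedding (kg1Embedding h) (gUnionEmbedding (kg1Embedding s) hu.kg2Embedding
    (by simp [mem_closedNbhd_range, Fin.forall_fin_two, *, Ne.symm])) (by
    simp [Fin.forall_fin_two, *])⟩

lemma contains_diamond {x₁ x₂ y₁ y₂ : α} (hx : G.Adj x₁ x₂) (hy : ¬ G.Adj y₁ y₂) (hne : y₁ ≠ y₂)
    (h₁₁ : G.Adj x₁ y₁) (h₁₂ : G.Adj x₁ y₂) (h₂₁ : G.Adj x₂ y₁) (h₂₂ : G.Adj x₂ y₂) :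
    Contains G diamond :=
  ⟨gJoinEmbedding hx.kg2Embedding (eg2Embedding hy hne) (by simp [Fin.forall_fin_two, *])⟩

def InTriangle (G : SimpleGraph α) (v : α) : Prop := ∃ a b, G.Adj v a ∧ G.Adj v b ∧ G.Adj a b

lemma inTriangle_kg3 (t : KG 3 ↪g G) (i : Fin 3) : InTriangle G (t i) := by
  have ht : ∀ j k, j ≠ k → G.Adj (t j) (t k) := fun j k h => t.map_adj_iff.mpr h
  fin_cases i
  exacts [⟨t 1, t 2, ht 0 1 (by decide), ht 0 2 (by decide), ht 1 2 (by decide)⟩,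
    ⟨t 0, t 2, ht 1 0 (by decide), ht 1 2 (by decide), ht 0 2 (by decide)⟩,
    ⟨t 0, t 1, ht 2 0 (by decide), ht 2 1 (by decide), ht 0 1 (by decide)⟩]

section PawDiamondFree
variable (hpaw : ¬ Contains G paw) (hdiamond : ¬ Contains G diamond)
include hpaw hdiamond

lemma adj_of_adj_of_triangle {v a b u : α} (hva : G.Adj v a) (hvb : G.Adj v b)
    (hab : G.Adj a b) (hvu : G.Adj v u) (hua : u ≠ a) (hub : u ≠ b) : G.Adj u a := by
  by_contra hua'
  by_cases hub' : G.Adj u b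
  · exact hdiamond (contains_diamond hvb hua' hua hvu hva hub'.symm hab.symm)
  · exact hpaw (contains_paw hvu hva hvb hab hua' hub' hua hub)

lemma InTriangle.exists_adj_adj {v x : α} (hv : InTriangle G v) (hvx : G.Adj v x) :
    ∃ c, G.Adj v c ∧ G.Adj x c := by
  obtain ⟨a, b, hva, hvb, hab⟩ := hv
  by_cases hxa : x = a
  · exact ⟨b, hvb, hxa ▸ hab⟩
  by_cases hxb : x = b
  · exact ⟨a, hva, hxb ▸ hab.symm⟩
  exact ⟨a, hva, adj_of_adj_of_triangle hpaw hdiamond hva hvb hab hvx hxa hxb⟩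

lemma InTriangle.of_adj {v u : α} (hv : InTriangle G v) (hvu : G.Adj v u) : InTriangle G u := by
  obtain ⟨c, hvc, huc⟩ := hv.exists_adj_adj hpaw hdiamond hvu
  exact ⟨v, c, hvu.symm, huc, hvc⟩

lemma InTriangle.isClique_neighborSet {v : α} (hv : InTriangle G v) :
    G.IsClique (G.neighborSet v) := by
  intro x hx z hz hxz
  obtain ⟨c, hvc, hxc⟩ := hv.exists_adj_adj hpaw hdiamond hx
  by_cases hzc : z = c
  · exact hzc ▸ hxc
  exact (adj_of_adj_of_triangle hpaw hdiamond hx hvc hxc hz (Ne.symm hxz) hzc).symm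

end PawDiamondFree

lemma contains_diamond_or_paw (t : KG 3 ↪g G) (p : pathGraph 3 ↪g G)
    (h : ∃ k, p k ∈ closedNbhd G (Set.range t)) : Contains G diamond ∨ Contains G paw := by
  by_contra! hfree
  obtain ⟨hdiamond, hpaw⟩ := hfree
  obtain ⟨k, hnear⟩ := h
  have hk : InTriangle G (p k) := by
    obtain ⟨i, hi | hi⟩ := mem_closedNbhd_range.mp hnear
    · exact hi ▸ inTriangle_kg3 t i
    · exact (inTriangle_kg3 t i).of_adj hpaw hdiamond hi
  have h01 : G.Adj (p 0) (p 1) := p.map_adj_iff.mpr (by simp [pathGraph_adj])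
  have h12 : G.Adj (p 1) (p 2) := p.map_adj_iff.mpr (by simp [pathGraph_adj])
  have hcentre : InTriangle G (p 1) := by
    fin_cases k
    · exact hk.of_adj hpaw hdiamond h01
    · exact hk
    · exact hk.of_adj hpaw hdiamond h12.symm
  exact p.map_adj_iff.not.mpr (by simp [pathGraph_adj])
    (hcentre.isClique_neighborSet hpaw hdiamond h01.symm h12 (p.injective.ne (by decide)))

lemma IsCograph.adj_of_path (hG : IsCograph G) {p q r s : α} (hpq : G.Adj p q) (hqr : G.Adj q r)
    (hrs : G.Adj r s) (hpr : ¬ G.Adj p r) (hqs : ¬ G.Adj q s) : G.Adj p s := by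
  by_contra hps
  have hpr' : p ≠ r := fun h => hps (h ▸ hrs)
  have hqs' : q ≠ s := fun h => hps (h ▸ hpq)
  have hps' : p ≠ s := fun h => hpr (h ▸ hrs.symm)
  have hinj : Function.Injective ![p, q, r, s] := by
    intro i j hij
    fin_cases i <;> fin_cases j <;>
      simp_all [hpq.ne, hqr.ne, hrs.ne, hpq.ne.symm, hqr.ne.symm, hrs.ne.symm, Ne.symm]
  refine hG ⟨⟨⟨![p, q, r, s], hinj⟩, ?_⟩⟩
  · intro i j
    fin_cases i <;> fin_cases j <;>
      simp [pathGraph_adj, hpq, hqr, hrs, hpq.symm, hqr.symm, hrs.symm, hpr, hqs, hps,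
        mt G.adj_symm hpr, mt G.adj_symm hqs, mt G.adj_symm hps]

lemma IsCograph.adj_of_adj_of_not_adj (hG : IsCograph G) {w x y z : α} (hwx : G.Adj w x)
    (hwy : G.Adj w y) (hxy : ¬ G.Adj x y) (hzx : G.Adj z x) (hzy : ¬ G.Adj z y) : G.Adj w z := by
  by_contra hwz
  exact hzy (hG.adj_of_path hzx hwx.symm hwy (mt G.adj_symm hwz) hxy)

lemma IsCograph.adj_of_adj_inl_of_adj_inr (hG : IsCograph G) {m n : ℕ}
    (e : gUnion (KG m) (KG n) ↪g G) {w : α} {i : Fin m} {j : Fin n}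
    (hi : G.Adj w (e (.inl i))) (hj : G.Adj w (e (.inr j))) (k : Fin m ⊕ Fin n) :
    G.Adj w (e k) := by
  have hij : ¬ G.Adj (e (.inl i)) (e (.inr j)) := e.map_adj_iff.not.mpr id
  rcases k with k | k
  · by_cases hk : k = i
    · exact hk ▸ hi
    exact hG.adj_of_adj_of_not_adj hi hj hij (e.map_adj_iff.mpr hk) (e.map_adj_iff.not.mpr id)
  · by_cases hk : k = j
    · exact hk ▸ hj
    exact hG.adj_of_adj_of_not_adj hj hi (mt G.adj_symm hij) (e.map_adj_iff.mpr hk)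
      (e.map_adj_iff.not.mpr id)

def FarApart (G : SimpleGraph α) (s t : Set α) : Prop :=
  ∀ u ∈ s, ∀ v ∈ t, u ≠ v ∧ ¬ G.Adj u v ∧ ∀ w, G.Adj u w → ¬ G.Adj w v

lemma FarApart.symm {s t : Set α} (h : FarApart G s t) : FarApart G t s := by
  intro u hu v hv
  obtain ⟨hne, hadj, hpath⟩ := h v hv u hu
  exact ⟨hne.symm, mt G.adj_symm hadj, fun w huw hwv => hpath w hwv.symm huw.symm⟩

lemma IsCograph.farApart_closedNbhd_left (hG : IsCograph G) {s t : Set α} (h : FarApart G s t) :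
    FarApart G (closedNbhd G s) t := by
  rintro u ⟨a, ha, rfl | hau⟩ v hv
  · exact h u ha v hv
  obtain ⟨-, hav, hpath⟩ := h a ha v hv
  have huv : ¬ G.Adj u v := hpath u hau
  refine ⟨fun huv => hav (huv ▸ hau), huv, fun w huw hwv => ?_⟩
  have haw : ¬ G.Adj a w := fun haw => hpath w haw hwv
  exact hav (hG.adj_of_path hau huw hwv haw huv)

lemma IsCograph.farApart_closedNbhd (hG : IsCograph G) {s t : Set α} (h : FarApart G s t) :
    FarApart G (closedNbhd G s) (closedNbhd G t) :=
  (hG.farApart_closedNbhd_left (hG.farApart_closedNbhd_left h).symm).symm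

lemma FarApart.notMem_of_pathGraph3 {s t : Set α} (h : FarApart G s t) (p : pathGraph 3 ↪g G)
    {i : Fin 3} (hi : p i ∈ s) (j : Fin 3) : p j ∉ t := by
  intro hj
  have hP3 : ∀ i j : Fin 3,
      i = j ∨ (pathGraph 3).Adj i j ∨ ((pathGraph 3).Adj i 1 ∧ (pathGraph 3).Adj 1 j) := by
    simp [Fin.forall_fin_succ, pathGraph_adj]
  obtain ⟨hne, hadj, hpath⟩ := h _ hi _ hj
  rcases hP3 i j with rfl | hij | ⟨hi1, h1j⟩
  exacts [hne rfl, hadj (p.map_adj_iff.mpr hij),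
    hpath _ (p.map_adj_iff.mpr hi1) (p.map_adj_iff.mpr h1j)]

def SimpleGraph.Embedding.codRestrict {H : SimpleGraph β} (f : H ↪g G) {s : Set α}
    (hf : ∀ v, f v ∈ s) : H ↪g G.induce s :=
  ⟨f.toEmbedding.codRestrict s hf, f.map_adj_iff⟩

lemma contains_gUnion_of_contains_induce {H₁ : SimpleGraph β} {H₂ : SimpleGraph γ} (f : H₁ ↪g G)
    (h : Contains (G.induce (closedNbhd G (Set.range f))ᶜ) H₂) : Contains G (gUnion H₁ H₂) :=
  let ⟨g⟩ := h
  ⟨gUnionEmbedding f ((Embedding.induce _).comp g) (fun j => (g j).2)⟩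

lemma contains_kg3_gUnion_of_farApart (t₁ t₂ : KG 3 ↪g G) (p : pathGraph 3 ↪g G)
    (hfar : FarApart G (closedNbhd G (Set.range t₁)) (closedNbhd G (Set.range t₂)))
    (hp : ∃ k, p k ∈ closedNbhd G (Set.range t₁)) :
    Contains G (gUnion (KG 3) diamond) ∨ Contains G (gUnion (KG 3) paw) := by
  obtain ⟨k, hk⟩ := hp
  have hpS : ∀ j, p j ∈ (closedNbhd G (Set.range t₂))ᶜ := hfar.notMem_of_pathGraph3 p hk
  have htS : ∀ i, t₁ i ∈ (closedNbhd G (Set.range t₂))ᶜ := fun i hi =>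
    (hfar _ (subset_closedNbhd _ ⟨i, rfl⟩) _ hi).1 rfl
  have hk' : p.codRestrict hpS k ∈ closedNbhd (G.induce _) (Set.range (t₁.codRestrict htS)) := by
    obtain ⟨i, hi⟩ := mem_closedNbhd_range.mp hk
    exact mem_closedNbhd_range.mpr ⟨i, hi.imp Subtype.ext id⟩
  exact (contains_diamond_or_paw _ _ ⟨k, hk'⟩).imp (contains_gUnion_of_contains_induce t₂)
    (contains_gUnion_of_contains_induce t₂)

end Development

theorem stmt_3_general {α : Type*} (G : SimpleGraph α) (hcog : IsCograph G)
    (hP3 : Contains G (pathGraph 3)) (h2K3 : Contains G twoK3) :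
    Contains G (gUnion twoK3 (pathGraph 3)) ∨ Contains G (gUnion (KG 3) diamond) ∨
      Contains G (gUnion (KG 3) paw) ∨ Contains G (gJoin (KG 1) twoK3) := by
  obtain ⟨p⟩ := hP3
  obtain ⟨e⟩ := h2K3
  let t₁ : KG 3 ↪g G := e.comp gUnion.inl
  let t₂ : KG 3 ↪g G := e.comp gUnion.inr
  by_cases hw : ∃ w i j, G.Adj w (t₁ i) ∧ G.Adj w (t₂ j)
  · obtain ⟨w, i, j, hi, hj⟩ := hw
    exact Or.inr <| Or.inr <| Or.inr
      ⟨gJoinEmbedding (kg1Embedding w) e fun _ => hcog.adj_of_adj_inl_of_adj_inr e hi hj⟩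
  have hfar : FarApart G (closedNbhd G (Set.range t₁)) (closedNbhd G (Set.range t₂)) := by
    refine hcog.farApart_closedNbhd ?_
    rintro _ ⟨i, rfl⟩ _ ⟨j, rfl⟩
    exact ⟨e.injective.ne Sum.inl_ne_inr, e.map_adj_iff.not.mpr id,
      fun w hiw hwj => hw ⟨w, i, j, hiw.symm, hwj⟩⟩
  by_cases h₁ : ∃ k, p k ∈ closedNbhd G (Set.range t₁)
  · exact Or.inr ((contains_kg3_gUnion_of_farApart t₁ t₂ p hfar h₁).imp id Or.inl)
  by_cases h₂ : ∃ k, p k ∈ closedNbhd G (Set.range t₂)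
  · exact Or.inr ((contains_kg3_gUnion_of_farApart t₂ t₁ p hfar.symm h₂).imp id Or.inl)
  refine Or.inl ⟨gUnionEmbedding e p fun k hk => ?_⟩
  obtain ⟨i | i, hi⟩ := mem_closedNbhd_range.mp hk
  exacts [h₁ ⟨k, mem_closedNbhd_range.mpr ⟨i, hi⟩⟩, h₂ ⟨k, mem_closedNbhd_range.mpr ⟨i, hi⟩⟩]

theorem stmt_3 {α : Type*} [Fintype α] (G : SimpleGraph α) (hcog : IsCograph G)
    (hP3 : Contains G (pathGraph 3)) (h2K3 : Contains G twoK3) :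
    Contains G (gUnion twoK3 (pathGraph 3)) ∨ Contains G (gUnion (KG 3) diamond) ∨
      Contains G (gUnion (KG 3) paw) ∨ Contains G (gJoin (KG 1) twoK3) :=
  stmt_3_general G hcog hP3 h2K3
end

section
/- A cograph G is (1,2)-partitionable if and only if G contains none of the following three graphs as an induced subgraph: the complement of 3K2 (equivalently, 2K1 ⊕ 2K1 ⊕ 2K1, the octahedron), 2K2 ⊕ 2K1, and 2K3. -/
open SimpleGraph

def octahedron := gJoin (EG 2) (gJoin (EG 2) (EG 2))


/-!
A cograph on at least two vertices splits into two nonempty parts that are either complete or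
anticomplete to each other (Seinsche), so partitions can be built by induction along this
decomposition. In a disjoint union a clique lies on one side, so the other side only has to be
bipartite; as there is no `2K₃`, one side is triangle-free, and triangle-free cographs are
bipartite. In a join where neither side is a clique, each side has a non-edge, which makes the
other side `2K₂`-free and `C₄`-free, hence split, and the two splits combine into one clique and
two independent sets. Conversely, each of the three forbidden graphs keeps a triangle outside
every clique, and (1,2)-partitions restrict to induced subgraphs.
-/

open Set

section Embeddings

variable {α β γ : Type*} {G : SimpleGraph α} {H : SimpleGraph β} {H₁ : SimpleGraph β}
  {H₂ : SimpleGraph γ}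

def SimpleGraph.Embedding.sumElimJoin (f : H₁ ↪g G) (g : H₂ ↪g G)
    (h : ∀ u v, G.Adj (f u) (g v)) : gJoin H₁ H₂ ↪g G where
  toFun := Sum.elim f g
  inj' := by
    rintro (u | u) (v | v) huv
    · exact congrArg Sum.inl (f.injective huv)
    · exact absurd huv (h u v).ne
    · exact absurd huv.symm (h v u).ne
    · exact congrArg Sum.inr (g.injective huv)
  map_rel_iff' := by
    rintro (u | u) (v | v)
    · exact f.map_rel_iff
    · exact iff_of_true (h u v) trivial
    · exact iff_of_true (h v u).symm trivial
    · exact g.map_rel_iff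

def SimpleGraph.Embedding.sumElimUnion (f : H₁ ↪g G) (g : H₂ ↪g G)
    (h : ∀ u v, Gᶜ.Adj (f u) (g v)) : gUnion H₁ H₂ ↪g G where
  toFun := Sum.elim f g
  inj' := by
    rintro (u | u) (v | v) huv
    · exact congrArg Sum.inl (f.injective huv)
    · exact absurd huv (h u v).1
    · exact absurd huv.symm (h v u).1
    · exact congrArg Sum.inr (g.injective huv)
  map_rel_iff' := by
    rintro (u | u) (v | v)
    · exact f.map_rel_iff
    · exact iff_of_false (h u v).2 id
    · exact iff_of_false (fun huv => (h v u).2 huv.symm) id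
    · exact g.map_rel_iff

theorem Contains.of_induce {s : Set α} (h : Contains (G.induce s) H) : Contains G H :=
  ⟨(Embedding.induce s).comp h.some⟩

theorem Contains.induce_mono {s t : Set α} (h : Contains (G.induce s) H) (hst : s ⊆ t) :
    Contains (G.induce t) H :=
  ⟨(G.induceHomOfLE hst).comp h.some⟩

theorem Contains.induce_union_gJoin {A B : Set α} (hA : Contains (G.induce A) H₁)
    (hB : Contains (G.induce B) H₂) (h : G.IsCompleteBetween A B) :
    Contains (G.induce (A ∪ B)) (gJoin H₁ H₂) :=
  ⟨Embedding.sumElimJoin ((G.induceHomOfLE subset_union_left).comp hA.some)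
    ((G.induceHomOfLE subset_union_right).comp hB.some)
    fun u v => h (hA.some u).2 (hB.some v).2⟩

theorem Contains.induce_union_gUnion {A B : Set α} (hA : Contains (G.induce A) H₁)
    (hB : Contains (G.induce B) H₂) (h : Gᶜ.IsCompleteBetween A B) :
    Contains (G.induce (A ∪ B)) (gUnion H₁ H₂) :=
  ⟨Embedding.sumElimUnion ((G.induceHomOfLE subset_union_left).comp hA.some)
    ((G.induceHomOfLE subset_union_right).comp hB.some)
    fun u v => ⟨fun huv => (h (hA.some u).2 (hB.some v).2).1 (congrArg Subtype.val huv),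
      (h (hA.some u).2 (hB.some v).2).2⟩⟩

theorem cliqueFree_two_induce_iff {s : Set α} : (G.induce s).CliqueFree 2 ↔ G.IsIndepSet s := by
  rw [cliqueFree_two, eq_bot_iff_forall_not_adj]
  exact ⟨fun h a ha b hb _ hab => h ⟨a, ha⟩ ⟨b, hb⟩ hab,
    fun h a b hab => h a.2 b.2 (G.ne_of_adj hab) hab⟩

theorem contains_induce_KG_two_iff {s : Set α} :
    Contains (G.induce s) (KG 2) ↔ ¬G.IsIndepSet s :=
  top_isIndContained_iff_top_isContained.trans <|
    (not_cliqueFree_iff_top_isContained 2).symm.trans (not_congr cliqueFree_two_induce_iff)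

theorem contains_induce_EG_two_iff {s : Set α} :
    Contains (G.induce s) (EG 2) ↔ ¬G.IsClique s := by
  have hcompl : (G.induce s)ᶜ = Gᶜ.induce s := by
    ext u v
    simp [Subtype.ext_iff]
  calc Contains (G.induce s) (EG 2) ↔ (EG 2)ᶜ ⊴ (G.induce s)ᶜ := compl_isIndContained_compl.symm
    _ ↔ Contains (Gᶜ.induce s) (KG 2) := by rw [hcompl, EG, compl_bot]; rfl
    _ ↔ ¬G.IsClique s := by rw [contains_induce_KG_two_iff, isIndepSet_compl]

theorem contains_induce_KG_three {s : Set α} {a b c : α} (ha : a ∈ s) (hb : b ∈ s) (hc : c ∈ s)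
    (hab : G.Adj a b) (hac : G.Adj a c) (hbc : G.Adj b c) : Contains (G.induce s) (KG 3) := by
  classical
  have htriangle : (G.induce s).IsNClique 3 {⟨a, ha⟩, ⟨b, hb⟩, ⟨c, hc⟩} :=
    is3Clique_triple_iff.mpr ⟨hab, hac, hbc⟩
  exact top_isIndContained_iff_top_isContained.mpr <|
    (not_cliqueFree_iff_top_isContained 3).mp htriangle.not_cliqueFree

end Embeddings

section Decomposition

variable {α : Type*} {G : SimpleGraph α}

theorem SimpleGraph.IsCompleteBetween.mono {s t s' t' : Set α} (h : G.IsCompleteBetween s t)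
    (hs : s' ⊆ s) (ht : t' ⊆ t) : G.IsCompleteBetween s' t' :=
  fun _ ha _ hb => h (hs ha) (ht hb)

def pathGraphFourEmbeddingCompl : pathGraph 4 ↪g (pathGraph 4)ᶜ where
  toFun := ![1, 3, 0, 2]
  inj' := by decide
  map_rel_iff' := by
    intro u v
    fin_cases u <;> fin_cases v <;> simp [pathGraph_adj, compl_adj]

theorem IsCograph.compl (hG : IsCograph G) : IsCograph Gᶜ := by
  intro h
  apply hG
  rw [← compl_compl G]
  exact (IsIndContained.trans ⟨pathGraphFourEmbeddingCompl⟩ (IsIndContained.compl h) :)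

theorem IsCograph.adj_of_path_s7 {a b c d : α} (hG : IsCograph G) (hab : G.Adj a b) (hbc : G.Adj b c)
    (hcd : G.Adj c d) (hac : ¬G.Adj a c) (hbd : ¬G.Adj b d) : G.Adj a d := by
  by_contra had
  have hac' : a ≠ c := fun h => had (h ▸ hcd)
  have had' : a ≠ d := fun h => hac (h ▸ hcd.symm)
  have hbd' : b ≠ d := fun h => had (h ▸ hab)
  refine hG ⟨⟨![a, b, c, d], ?_⟩, ?_⟩
  · intro u v huv
    fin_cases u <;> fin_cases v <;>
      simp_all [hab.ne, hab.ne', hbc.ne, hbc.ne', hcd.ne, hcd.ne', hac'.symm, had'.symm, hbd'.symm]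
  · intro u v
    change G.Adj (![a, b, c, d] u) (![a, b, c, d] v) ↔ _
    fin_cases u <;> fin_cases v <;>
      simp [pathGraph_adj, hab, hab.symm, hbc, hbc.symm, hcd, hcd.symm, hac, hbd, had,
        G.adj_comm c a, G.adj_comm d a, G.adj_comm d b]

/-- `Gᶜ.IsCompleteBetween A B` says that `A` and `B` are disjoint and anticomplete in `G`. -/
def IsDecomposable (G : SimpleGraph α) (s : Set α) : Prop :=
  ∃ A B, A ∪ B = s ∧ A.Nonempty ∧ B.Nonempty ∧
    (G.IsCompleteBetween A B ∨ Gᶜ.IsCompleteBetween A B)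

theorem isDecomposable_compl {s : Set α} : IsDecomposable Gᶜ s ↔ IsDecomposable G s := by
  simp only [IsDecomposable, compl_compl, or_comm]

theorem isDecomposable_pair {x y : α} (hxy : x ≠ y) : IsDecomposable G {x, y} := by
  refine ⟨{x}, {y}, singleton_union, singleton_nonempty x, singleton_nonempty y, ?_⟩
  simp [SimpleGraph.IsCompleteBetween, compl_adj, hxy, em]

theorem isDecomposable_insert_union {A B : Set α} {x : α} (hA : A.Nonempty)
    (h : Gᶜ.IsCompleteBetween A (insert x B)) : IsDecomposable G (insert x (A ∪ B)) :=
  ⟨A, insert x B, union_insert, hA, insert_nonempty x B, .inr h⟩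

theorem IsCograph.isDecomposable_insert {A B : Set α} {x : α} (hG : IsCograph G)
    (hAB : Gᶜ.IsCompleteBetween A B) (hA : A.Nonempty) (hB : B.Nonempty) (hx : x ∉ A ∪ B) :
    IsDecomposable G (insert x (A ∪ B)) := by
  have hxA : x ∉ A := fun h => hx (Or.inl h)
  have hxB : x ∉ B := fun h => hx (Or.inr h)
  by_cases hA' : ∃ a ∈ A, G.Adj x a
  swap
  · push Not at hA'
    refine isDecomposable_insert_union hA ?_
    rintro a ha y (rfl | hy)
    exacts [⟨fun h => hxA (h ▸ ha), fun h => hA' a ha h.symm⟩, hAB ha hy]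
  by_cases hB' : ∃ b ∈ B, G.Adj x b
  swap
  · push Not at hB'
    rw [union_comm]
    refine isDecomposable_insert_union hB ?_
    rintro b hb y (rfl | hy)
    exacts [⟨fun h => hxB (h ▸ hb), fun h => hB' b hb h.symm⟩, hAB.symm _ hb hy]
  by_cases hall : ∀ y ∈ A ∪ B, G.Adj x y
  · exact ⟨{x}, A ∪ B, singleton_union, singleton_nonempty x, hA.mono subset_union_left,
      .inl fun _ hx' y hy => (mem_singleton_iff.mp hx') ▸ hall y hy⟩
  push Not at hall
  obtain ⟨c₀, hc₀, hxc₀⟩ := hall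
  -- a neighbour `d` and a non-neighbour `c` of `x` on the same side, together with a neighbour
  -- `w` of `x` on the other side, would span an induced path `c d x w`
  have same_side : ∀ {X Y : Set α}, Gᶜ.IsCompleteBetween X Y → (∃ w ∈ Y, G.Adj x w) →
      ∀ {c d}, c ∈ X ∪ Y → d ∈ X → ¬G.Adj x c → G.Adj x d → ¬G.Adj c d := by
    rintro X Y hXY ⟨w, hw, hxw⟩ c d (hc | hc) hd hxc hxd hcd
    · exact (hXY hc hw).2 (hG.adj_of_path_s7 hcd hxd.symm hxw (fun h => hxc h.symm) (hXY hd hw).2)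
    · exact (hXY hd hc).2 hcd.symm
  refine ⟨{y ∈ A ∪ B | ¬G.Adj x y}, insert x {y ∈ A ∪ B | G.Adj x y}, ?_, ⟨c₀, hc₀, hxc₀⟩,
    insert_nonempty _ _, .inr ?_⟩
  · ext y
    by_cases hxy : G.Adj x y <;> simp [hxy]
  rintro c ⟨hc, hxc⟩ y (rfl | ⟨hd, hxd⟩)
  · exact ⟨fun h => hx (h ▸ hc), fun h => hxc h.symm⟩
  refine ⟨fun h => hxc (h ▸ hxd), ?_⟩
  rcases hd with hd | hd
  · exact same_side hAB hB' hc hd hxc hxd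
  · exact same_side (hAB.symm _) hA' (union_comm A B ▸ hc) hd hxc hxd

theorem IsCograph.isDecomposable [Finite α] (hG : IsCograph G) {s : Set α} (hs : s.Nontrivial) :
    IsDecomposable G s := by
  induction s, s.toFinite using Set.Finite.induction_on with
  | empty => exact absurd hs not_nontrivial_empty
  | @insert x s hx _ ih =>
    rcases s.subsingleton_or_nontrivial with hs' | hs'
    · obtain ⟨y, hy, hyx⟩ := hs.exists_ne x
      obtain rfl : s = {y} := hs'.eq_singleton_of_mem ((mem_insert_iff.mp hy).resolve_left hyx)
      exact isDecomposable_pair hyx.symm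
    obtain ⟨A, B, rfl, hA, hB, hAB | hAB⟩ := ih hs'
    -- `A` is complete to `B` in `G` iff it is anticomplete to `B` in the cograph `Gᶜ`
    · rw [← compl_compl G] at hAB
      exact isDecomposable_compl.mp (hG.compl.isDecomposable_insert hAB hA hB hx)
    · exact hG.isDecomposable_insert hAB hA hB hx

theorem IsCograph.induction [Finite α] (hG : IsCograph G) {P : Set α → Prop}
    (subsingleton : ∀ s : Set α, s.Subsingleton → P s)
    (join : ∀ A B, A.Nonempty → B.Nonempty → G.IsCompleteBetween A B → P A → P B → P (A ∪ B))
    (union : ∀ A B, A.Nonempty → B.Nonempty → Gᶜ.IsCompleteBetween A B → P A → P B →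
      P (A ∪ B))
    (s : Set α) : P s := by
  induction s using WellFoundedLT.induction with
  | _ s ih =>
  rcases s.subsingleton_or_nontrivial with hs | hs
  · exact subsingleton s hs
  obtain ⟨A, B, rfl, hA, hB, hAB⟩ := hG.isDecomposable hs
  have hdisj : Disjoint A B :=
    hAB.elim (IsCompleteBetween.disjoint _) (IsCompleteBetween.disjoint _)
  have hAs : A ⊂ A ∪ B := ssubset_union_left_iff.mpr fun h =>
    disjoint_left.mp hdisj (h hB.some_mem) hB.some_mem
  have hBs : B ⊂ A ∪ B := union_comm B A ▸ ssubset_union_left_iff.mpr fun h =>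
    disjoint_left.mp hdisj hA.some_mem (h hA.some_mem)
  rcases hAB with hAB | hAB
  · exact join A B hA hB hAB (ih A hAs) (ih B hBs)
  · exact union A B hA hB hAB (ih A hAs) (ih B hBs)

end Decomposition

section Partitions

variable {α : Type*} {G : SimpleGraph α}

theorem SimpleGraph.IsClique.union_of_isCompleteBetween {s t : Set α} (hs : G.IsClique s)
    (ht : G.IsClique t) (h : G.IsCompleteBetween s t) : G.IsClique (s ∪ t) :=
  pairwise_union.mpr ⟨hs, ht, fun _ ha _ hb _ => ⟨h ha hb, (h ha hb).symm⟩⟩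

theorem SimpleGraph.IsIndepSet.union_of_isCompleteBetween_compl {s t : Set α}
    (hs : G.IsIndepSet s) (ht : G.IsIndepSet t) (h : Gᶜ.IsCompleteBetween s t) :
    G.IsIndepSet (s ∪ t) :=
  G.isClique_compl.mp <|
    (G.isClique_compl.mpr hs).union_of_isCompleteBetween (G.isClique_compl.mpr ht) h

def IsBipartiteOn (G : SimpleGraph α) (s : Set α) : Prop :=
  ∃ S₁ S₂, S₁ ∪ S₂ = s ∧ G.IsIndepSet S₁ ∧ G.IsIndepSet S₂

def IsSplitOn (G : SimpleGraph α) (s : Set α) : Prop :=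
  ∃ C I, C ∪ I = s ∧ G.IsClique C ∧ G.IsIndepSet I

def OneTwoPartitionableOn (G : SimpleGraph α) (s : Set α) : Prop :=
  ∃ C I, C ∪ I = s ∧ G.IsClique C ∧ IsBipartiteOn G I

variable {A B : Set α}

theorem IsBipartiteOn.union (hA : IsBipartiteOn G A) (hB : IsBipartiteOn G B)
    (h : Gᶜ.IsCompleteBetween A B) : IsBipartiteOn G (A ∪ B) := by
  obtain ⟨S₁, S₂, rfl, hS₁, hS₂⟩ := hA
  obtain ⟨T₁, T₂, rfl, hT₁, hT₂⟩ := hB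
  exact ⟨S₁ ∪ T₁, S₂ ∪ T₂, union_union_union_comm _ _ _ _,
    hS₁.union_of_isCompleteBetween_compl hT₁ (h.mono subset_union_left subset_union_left),
    hS₂.union_of_isCompleteBetween_compl hT₂ (h.mono subset_union_right subset_union_right)⟩

theorem IsSplitOn.union_of_isIndepSet (hA : IsSplitOn G A) (hB : G.IsIndepSet B)
    (h : Gᶜ.IsCompleteBetween A B) : IsSplitOn G (A ∪ B) := by
  obtain ⟨C, I, rfl, hC, hI⟩ := hA
  exact ⟨C, I ∪ B, (union_assoc C I B).symm, hC,
    hI.union_of_isCompleteBetween_compl hB (h.mono subset_union_right subset_rfl)⟩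

theorem IsSplitOn.union_of_isClique (hA : IsSplitOn G A) (hB : G.IsClique B)
    (h : G.IsCompleteBetween A B) : IsSplitOn G (A ∪ B) := by
  obtain ⟨C, I, rfl, hC, hI⟩ := hA
  exact ⟨C ∪ B, I, union_right_comm C B I,
    hC.union_of_isCompleteBetween hB (h.mono subset_union_left subset_rfl), hI⟩

theorem IsSplitOn.oneTwoPartitionableOn_union (hA : IsSplitOn G A) (hB : IsSplitOn G B)
    (h : G.IsCompleteBetween A B) : OneTwoPartitionableOn G (A ∪ B) := by
  obtain ⟨C, I, rfl, hC, hI⟩ := hA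
  obtain ⟨D, J, rfl, hD, hJ⟩ := hB
  exact ⟨C ∪ D, I ∪ J, union_union_union_comm _ _ _ _,
    hC.union_of_isCompleteBetween hD (h.mono subset_union_left subset_union_left),
    I, J, rfl, hI, hJ⟩

theorem OneTwoPartitionableOn.union_of_isBipartiteOn (hA : OneTwoPartitionableOn G A)
    (hB : IsBipartiteOn G B) (h : Gᶜ.IsCompleteBetween A B) :
    OneTwoPartitionableOn G (A ∪ B) := by
  obtain ⟨C, I, rfl, hC, hI⟩ := hA
  exact ⟨C, I ∪ B, (union_assoc C I B).symm, hC,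
    hI.union hB (h.mono subset_union_right subset_rfl)⟩

theorem OneTwoPartitionableOn.union_of_isClique (hA : OneTwoPartitionableOn G A)
    (hB : G.IsClique B) (h : G.IsCompleteBetween A B) : OneTwoPartitionableOn G (A ∪ B) := by
  obtain ⟨C, I, rfl, hC, hI⟩ := hA
  exact ⟨C ∪ B, I, union_right_comm C B I,
    hC.union_of_isCompleteBetween hB (h.mono subset_union_left subset_rfl), hI⟩

theorem OneTwoPartitionableOn.oneTwoPartitionable (h : OneTwoPartitionableOn G univ) :
    OneTwoPartitionable G := by
  obtain ⟨C, _, hCI, hC, S₁, S₂, rfl, hS₁, hS₂⟩ := h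
  exact ⟨C, S₁, S₂, by rw [union_assoc, hCI], hC, cliqueFree_two_induce_iff.mpr hS₁,
    cliqueFree_two_induce_iff.mpr hS₂⟩

end Partitions

section Cographs

variable {α : Type*} [Finite α] {G : SimpleGraph α}

theorem IsCograph.isBipartiteOn (hG : IsCograph G) {s : Set α}
    (hK₃ : ¬Contains (G.induce s) (KG 3)) : IsBipartiteOn G s := by
  refine hG.induction (P := fun t => t ⊆ s → IsBipartiteOn G t)
    (fun t ht _ => ⟨t, ∅, union_empty t, ht.pairwise _, pairwise_empty _⟩)
    (fun A B hA hB hAB _ _ hAB_s => ?_) (fun A B _ _ hAB ihA ihB hAB_s => ?_) s subset_rfl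
  · have indep : ∀ {X Y : Set α}, X ⊆ s → Y ⊆ s → Y.Nonempty → G.IsCompleteBetween X Y →
        G.IsIndepSet X := by
      rintro X Y hX hY ⟨y, hy⟩ hXY a ha b hb - hab
      exact hK₃ (contains_induce_KG_three (hX ha) (hX hb) (hY hy) hab (hXY ha hy) (hXY hb hy))
    have hA_s := subset_union_left.trans hAB_s
    have hB_s := subset_union_right.trans hAB_s
    exact ⟨A, B, rfl, indep hA_s hB_s hB hAB, indep hB_s hA_s hA (hAB.symm _)⟩
  · exact (ihA (subset_union_left.trans hAB_s)).union (ihB (subset_union_right.trans hAB_s)) hAB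

theorem IsCograph.isSplitOn (hG : IsCograph G) {s : Set α}
    (h2K₂ : ¬Contains (G.induce s) twoK2) (hC₄ : ¬Contains (G.induce s) (gJoin (EG 2) (EG 2))) :
    IsSplitOn G s := by
  refine hG.induction (P := fun t => t ⊆ s → IsSplitOn G t)
    (fun t ht _ => ⟨t, ∅, union_empty t, ht.pairwise _, pairwise_empty _⟩)
    (fun A B _ _ hAB ihA ihB hAB_s => ?_) (fun A B _ _ hAB ihA ihB hAB_s => ?_) s subset_rfl
  · have hA := ihA (subset_union_left.trans hAB_s)
    have hB := ihB (subset_union_right.trans hAB_s)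
    by_cases hBc : G.IsClique B
    · exact hA.union_of_isClique hBc hAB
    by_cases hAc : G.IsClique A
    · exact union_comm B A ▸ hB.union_of_isClique hAc (hAB.symm _)
    rw [← contains_induce_EG_two_iff] at hAc hBc
    exact absurd ((hAc.induce_union_gJoin hBc hAB).induce_mono hAB_s) hC₄
  · have hA := ihA (subset_union_left.trans hAB_s)
    have hB := ihB (subset_union_right.trans hAB_s)
    by_cases hBi : G.IsIndepSet B
    · exact hA.union_of_isIndepSet hBi hAB
    by_cases hAi : G.IsIndepSet A
    · exact union_comm B A ▸ hB.union_of_isIndepSet hAi (hAB.symm _)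
    rw [← contains_induce_KG_two_iff] at hAi hBi
    exact absurd ((hAi.induce_union_gUnion hBi hAB).induce_mono hAB_s) h2K₂

theorem IsCograph.oneTwoPartitionableOn (hG : IsCograph G) {s : Set α}
    (hoct : ¬Contains (G.induce s) octahedron)
    (hjoin : ¬Contains (G.induce s) (gJoin twoK2 (EG 2)))
    (h2K₃ : ¬Contains (G.induce s) twoK3) : OneTwoPartitionableOn G s := by
  refine hG.induction (P := fun t => t ⊆ s → OneTwoPartitionableOn G t)
    (fun t ht _ => ⟨t, ∅, union_empty t, ht.pairwise _, ∅, ∅, union_empty ∅, pairwise_empty _,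
      pairwise_empty _⟩)
    (fun A B _ _ hAB ihA ihB hAB_s => ?_) (fun A B _ _ hAB ihA ihB hAB_s => ?_) s subset_rfl
  · have hA_s := subset_union_left.trans hAB_s
    have hB_s := subset_union_right.trans hAB_s
    by_cases hBc : G.IsClique B
    · exact (ihA hA_s).union_of_isClique hBc hAB
    by_cases hAc : G.IsClique A
    · exact union_comm B A ▸ (ihB hB_s).union_of_isClique hAc (hAB.symm _)
    rw [← contains_induce_EG_two_iff] at hAc hBc
    -- a non-edge complete to `X` turns a `2K₂` in `X` into `2K₂ ⊕ 2K₁` and a `C₄` into the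
    -- octahedron
    have split : ∀ {X Y : Set α}, X ⊆ s → Y ⊆ s → Contains (G.induce Y) (EG 2) →
        G.IsCompleteBetween X Y → IsSplitOn G X := by
      intro X Y hX hY hY₂ hXY
      refine hG.isSplitOn (fun hX₂ => hjoin ?_) (fun hX₄ => hoct ?_)
      · exact (hX₂.induce_union_gJoin hY₂ hXY).induce_mono (union_subset hX hY)
      · exact (hY₂.induce_union_gJoin hX₄ (hXY.symm _)).induce_mono (union_subset hY hX)
    exact (split hA_s hB_s hBc hAB).oneTwoPartitionableOn_union
      (split hB_s hA_s hAc (hAB.symm _)) hAB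
  · have hA_s := subset_union_left.trans hAB_s
    have hB_s := subset_union_right.trans hAB_s
    by_cases hB₃ : Contains (G.induce B) (KG 3)
    · have hA₃ : ¬Contains (G.induce A) (KG 3) := fun hA₃ =>
        h2K₃ ((hA₃.induce_union_gUnion hB₃ hAB).induce_mono hAB_s)
      exact union_comm B A ▸ (ihB hB_s).union_of_isBipartiteOn (hG.isBipartiteOn hA₃)
        (hAB.symm _)
    · exact (ihA hA_s).union_of_isBipartiteOn (hG.isBipartiteOn hB₃) hAB

end Cographs

section SmallGraphs

instance {α β : Type*} (G : SimpleGraph α) (H : SimpleGraph β)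
    [DecidableRel G.Adj] [DecidableRel H.Adj] : DecidableRel (gUnion G H).Adj
  | Sum.inl a, Sum.inl b => inferInstanceAs (Decidable (G.Adj a b))
  | Sum.inl _, Sum.inr _ => isFalse id
  | Sum.inr _, Sum.inl _ => isFalse id
  | Sum.inr a, Sum.inr b => inferInstanceAs (Decidable (H.Adj a b))

instance {α β : Type*} (G : SimpleGraph α) (H : SimpleGraph β)
    [DecidableRel G.Adj] [DecidableRel H.Adj] : DecidableRel (gJoin G H).Adj
  | Sum.inl a, Sum.inl b => inferInstanceAs (Decidable (G.Adj a b))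
  | Sum.inl _, Sum.inr _ => isTrue trivial
  | Sum.inr _, Sum.inl _ => isTrue trivial
  | Sum.inr a, Sum.inr b => inferInstanceAs (Decidable (H.Adj a b))

instance (n : ℕ) : DecidableRel (KG n).Adj := fun a b => inferInstanceAs (Decidable (a ≠ b))

instance (n : ℕ) : DecidableRel (EG n).Adj := fun _ _ => isFalse id

instance : DecidableRel twoK2.Adj := inferInstanceAs (DecidableRel (gUnion (KG 2) (KG 2)).Adj)

instance : DecidableRel twoK3.Adj := inferInstanceAs (DecidableRel (gUnion (KG 3) (KG 3)).Adj)

instance : DecidableRel octahedron.Adj :=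
  inferInstanceAs (DecidableRel (gJoin (EG 2) (gJoin (EG 2) (EG 2))).Adj)

/-- The clique is given by its indicator `p`, so that the property is decidable for finite `H`. -/
def HasTriangleOffEveryClique {V : Type*} (H : SimpleGraph V) : Prop :=
  ∀ p : V → Bool, (∀ u v, p u → p v → u ≠ v → H.Adj u v) →
    ∃ a b c, p a = false ∧ p b = false ∧ p c = false ∧ H.Adj a b ∧ H.Adj a c ∧ H.Adj b c

instance {V : Type*} [Fintype V] [DecidableEq V] (H : SimpleGraph V) [DecidableRel H.Adj] :
    Decidable (HasTriangleOffEveryClique H) := by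
  unfold HasTriangleOffEveryClique
  infer_instance

theorem hasTriangleOffEveryClique_octahedron : HasTriangleOffEveryClique octahedron := by
  decide

theorem hasTriangleOffEveryClique_gJoin_twoK2 :
    HasTriangleOffEveryClique (gJoin twoK2 (EG 2)) := by
  decide

theorem hasTriangleOffEveryClique_twoK3 : HasTriangleOffEveryClique twoK3 := by
  decide

theorem OneTwoPartitionable.not_contains {α V : Type*} {G : SimpleGraph α} {H : SimpleGraph V}
    (hG : OneTwoPartitionable G) (hH : HasTriangleOffEveryClique H) : ¬Contains G H := by
  classical
  rintro ⟨f⟩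
  obtain ⟨C, S₁, S₂, hcover, hC, hS₁, hS₂⟩ := hG
  rw [cliqueFree_two_induce_iff] at hS₁ hS₂
  obtain ⟨a, b, c, ha, hb, hc, hab, hac, hbc⟩ := hH (fun v => decide (f v ∈ C))
    fun u v hu hv huv => f.map_rel_iff.mp <|
      hC (of_decide_eq_true hu) (of_decide_eq_true hv) (f.injective.ne huv)
  have alternate : ∀ {u v}, decide (f u ∈ C) = false → decide (f v ∈ C) = false →
      H.Adj u v → (f u ∈ S₁ ↔ f v ∉ S₁) := by
    intro u v hu hv huv
    have hfuv := f.map_rel_iff.mpr huv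
    have mem : ∀ {w}, decide (f w ∈ C) = false → f w ∉ S₁ → f w ∈ S₂ := fun {w} hw hw₁ =>
      ((hcover ▸ mem_univ (f w) : f w ∈ C ∪ S₁ ∪ S₂).resolve_left
        (fun h => h.elim (of_decide_eq_false hw) hw₁))
    exact ⟨fun hu₁ hv₁ => hS₁ hu₁ hv₁ hfuv.ne hfuv,
      fun hv₁ => not_not.mp fun hu₁ => hS₂ (mem hu hu₁) (mem hv hv₁) hfuv.ne hfuv⟩
  have := alternate ha hb hab
  have := alternate ha hc hac
  have := alternate hb hc hbc
  tauto

end SmallGraphs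

theorem stmt_7 {α : Type*} [Fintype α] (G : SimpleGraph α) (hcog : IsCograph G) :
    OneTwoPartitionable G ↔
      (¬ Contains G octahedron ∧ ¬ Contains G (gJoin twoK2 (EG 2)) ∧
       ¬ Contains G twoK3) := by
  refine ⟨fun h => ⟨h.not_contains hasTriangleOffEveryClique_octahedron,
    h.not_contains hasTriangleOffEveryClique_gJoin_twoK2,
    h.not_contains hasTriangleOffEveryClique_twoK3⟩, fun ⟨hoct, hjoin, h2K₃⟩ => ?_⟩
  exact (hcog.oneTwoPartitionableOn (s := univ) (fun h => hoct h.of_induce)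
    (fun h => hjoin h.of_induce) (fun h => h2K₃ h.of_induce)).oneTwoPartitionable
end

section
/- Let G be a cograph that is in-partitionable and such that every proper induced subgraph of G is partitionable (i.e. G is a vertex-minimal in-partitionable cograph). Then G is connected. -/
open SimpleGraph

/-!
A triangle and an induced `P₃` are connected, so each lies inside a single connected
component. Hence partitions of a component `S` and of its complement glue to a partition
of `G`; if `G` were disconnected, minimality would supply both of them.
-/

section

variable {α β : Type*}

theorem cliqueFree_three_iff {H : SimpleGraph β} :
    H.CliqueFree 3 ↔ ∀ a b c, H.Adj a b → H.Adj a c → ¬ H.Adj b c := by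
  classical
  constructor
  · intro h a b c hab hac hbc
    exact h {a, b, c} (is3Clique_triple_iff.2 ⟨hab, hac, hbc⟩)
  · rintro h t ht
    obtain ⟨a, b, c, hab, hac, hbc, -⟩ := is3Clique_iff.1 ht
    exact h a b c hab hac hbc

theorem contains_pathGraph_three_iff {H : SimpleGraph β} :
    Contains H (pathGraph 3) ↔ ∃ a b c, H.Adj a b ∧ H.Adj b c ∧ ¬ H.Adj a c ∧ a ≠ c := by
  constructor
  · rintro ⟨f⟩
    refine ⟨f 0, f 1, f 2, f.map_adj_iff.2 ?_, f.map_adj_iff.2 ?_, ?_, ?_⟩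
    · rw [pathGraph_adj]; decide
    · rw [pathGraph_adj]; decide
    · rw [f.map_adj_iff, pathGraph_adj]; decide
    · exact f.injective.ne (by decide)
  · rintro ⟨a, b, c, hab, hbc, hac, hne⟩
    refine ⟨⟨⟨![a, b, c], ?_⟩, ?_⟩⟩
    · intro i j hij
      fin_cases i <;> fin_cases j <;> simp_all [hab.ne, hbc.ne, hab.ne.symm, hbc.ne.symm]
    · intro i j
      change H.Adj (![a, b, c] i) (![a, b, c] j) ↔ _
      have hca : ¬ H.Adj c a := fun h => hac h.symm
      fin_cases i <;> fin_cases j <;> simp [pathGraph_adj, hab, hbc, hab.symm, hbc.symm, hac, hca]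

theorem Partitionable.of_isEmpty [IsEmpty α] (G : SimpleGraph α) : Partitionable G :=
  ⟨∅, cliqueFree_three_iff.2 fun a => a.2.elim,
    fun h => by
      obtain ⟨a, -⟩ := contains_pathGraph_three_iff.1 h
      exact isEmptyElim a.1⟩

theorem mem_image_val_union_left {S : Set α} {A₁ : Set S} {A₂ : Set ↥Sᶜ} {x : α}
    (hx : x ∈ S) : x ∈ Subtype.val '' A₁ ∪ Subtype.val '' A₂ ↔ (⟨x, hx⟩ : S) ∈ A₁ := by
  simp [hx]

theorem mem_image_val_union_right {S : Set α} {A₁ : Set S} {A₂ : Set ↥Sᶜ} {x : α}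
    (hx : x ∈ Sᶜ) : x ∈ Subtype.val '' A₁ ∪ Subtype.val '' A₂ ↔ (⟨x, hx⟩ : ↥Sᶜ) ∈ A₂ := by
  simp [show x ∉ S from hx]

theorem cliqueFree_three_induce_image_val_union {G : SimpleGraph α} {S : Set α}
    (hS : ∀ ⦃x y⦄, G.Adj x y → x ∈ S → y ∈ S) {A₁ : Set S} {A₂ : Set ↥Sᶜ}
    (hA₁ : ((G.induce S).induce A₁).CliqueFree 3) (hA₂ : ((G.induce Sᶜ).induce A₂).CliqueFree 3) :
    (G.induce (Subtype.val '' A₁ ∪ Subtype.val '' A₂)).CliqueFree 3 := by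
  have hSc : ∀ ⦃x y⦄, G.Adj x y → x ∈ Sᶜ → y ∈ Sᶜ := fun _ _ hxy hx hy => hx (hS hxy.symm hy)
  rw [cliqueFree_three_iff]
  rintro ⟨a, ha⟩ ⟨b, hb⟩ ⟨c, hc⟩ hab hac
  by_cases haS : a ∈ S
  · have hbS := hS hab haS
    have hcS := hS hac haS
    exact cliqueFree_three_iff.1 hA₁ ⟨⟨a, haS⟩, (mem_image_val_union_left haS).1 ha⟩
      ⟨⟨b, hbS⟩, (mem_image_val_union_left hbS).1 hb⟩
      ⟨⟨c, hcS⟩, (mem_image_val_union_left hcS).1 hc⟩ hab hac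
  · have hbS := hSc hab haS
    have hcS := hSc hac haS
    exact cliqueFree_three_iff.1 hA₂ ⟨⟨a, haS⟩, (mem_image_val_union_right haS).1 ha⟩
      ⟨⟨b, hbS⟩, (mem_image_val_union_right hbS).1 hb⟩
      ⟨⟨c, hcS⟩, (mem_image_val_union_right hcS).1 hc⟩ hab hac

theorem not_contains_pathGraph_three_induce_compl_image_val_union {G : SimpleGraph α}
    {S : Set α} (hS : ∀ ⦃x y⦄, G.Adj x y → x ∈ S → y ∈ S) {A₁ : Set S} {A₂ : Set ↥Sᶜ}
    (hB₁ : ¬ Contains ((G.induce S).induce A₁ᶜ) (pathGraph 3))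
    (hB₂ : ¬ Contains ((G.induce Sᶜ).induce A₂ᶜ) (pathGraph 3)) :
    ¬ Contains (G.induce (Subtype.val '' A₁ ∪ Subtype.val '' A₂)ᶜ) (pathGraph 3) := by
  have hSc : ∀ ⦃x y⦄, G.Adj x y → x ∈ Sᶜ → y ∈ Sᶜ := fun _ _ hxy hx hy => hx (hS hxy.symm hy)
  rw [contains_pathGraph_three_iff]
  rintro ⟨⟨a, ha⟩, ⟨b, hb⟩, ⟨c, hc⟩, hab, hbc, hac, hne⟩
  replace hne : a ≠ c := Subtype.coe_ne_coe.2 hne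
  by_cases hbS : b ∈ S
  · have haS := hS hab.symm hbS
    have hcS := hS hbc hbS
    exact hB₁ (contains_pathGraph_three_iff.2
      ⟨⟨⟨a, haS⟩, mt (mem_image_val_union_left haS).2 ha⟩,
        ⟨⟨b, hbS⟩, mt (mem_image_val_union_left hbS).2 hb⟩,
        ⟨⟨c, hcS⟩, mt (mem_image_val_union_left hcS).2 hc⟩,
        hab, hbc, hac, ne_of_apply_ne (fun x => x.1.1) hne⟩)
  · have haS := hSc hab.symm hbS
    have hcS := hSc hbc hbS
    exact hB₂ (contains_pathGraph_three_iff.2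
      ⟨⟨⟨a, haS⟩, mt (mem_image_val_union_right haS).2 ha⟩,
        ⟨⟨b, hbS⟩, mt (mem_image_val_union_right hbS).2 hb⟩,
        ⟨⟨c, hcS⟩, mt (mem_image_val_union_right hcS).2 hc⟩,
        hab, hbc, hac, ne_of_apply_ne (fun x => x.1.1) hne⟩)

theorem Partitionable.of_induce_of_induce_compl {G : SimpleGraph α} {S : Set α}
    (hS : ∀ ⦃x y⦄, G.Adj x y → x ∈ S → y ∈ S)
    (h₁ : Partitionable (G.induce S)) (h₂ : Partitionable (G.induce Sᶜ)) :
    Partitionable G :=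
  let ⟨_, hA₁, hB₁⟩ := h₁
  let ⟨_, hA₂, hB₂⟩ := h₂
  ⟨_, cliqueFree_three_induce_image_val_union hS hA₁ hA₂,
    not_contains_pathGraph_three_induce_compl_image_val_union hS hB₁ hB₂⟩

end

theorem stmt_11_general {α : Type*} (G : SimpleGraph α)
    (hnp : ¬ Partitionable G)
    (hmin : ∀ A : Set α, A ≠ Set.univ → Partitionable (G.induce A)) :
    G.Connected := by
  have hα : Nonempty α := not_isEmpty_iff.1 fun _ => hnp (Partitionable.of_isEmpty G)
  refine (connected_iff G).2 ⟨fun u v => ?_, hα⟩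
  by_contra huv
  let S : Set α := {x | G.Reachable u x}
  have hvS : v ∉ S := huv
  have huS : u ∉ Sᶜ := fun h => h (Reachable.refl u)
  exact hnp (Partitionable.of_induce_of_induce_compl
    (fun _ _ hxy hx => hx.trans hxy.reachable)
    (hmin S fun h => hvS (h ▸ Set.mem_univ v)) (hmin Sᶜ fun h => huS (h ▸ Set.mem_univ u)))

theorem stmt_11 {α : Type*} [Fintype α] (G : SimpleGraph α) (hcog : IsCograph G)
    (hnp : ¬ Partitionable G)
    (hmin : ∀ A : Set α, A ≠ Set.univ → Partitionable (G.induce A)) :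
    G.Connected :=
  stmt_11_general G hnp hmin
end

section
/- A cograph G = (V,E) is partitionable if and only if there exists a partition {A,B} of V such that the subgraph induced by A is P3-free (a disjoint union of cliques) and the subgraph induced by B is bipartite. -/
open SimpleGraph

/-!
In a triangle-free cograph two vertices with a common neighbour have the same neighbourhood,
since otherwise an induced `P₄` appears. Hence every vertex of a connected component is either
adjacent to a fixed root `r` of the component or has the same neighbourhood as `r`, and colouring
each vertex by whether it is adjacent to its root is proper. So the triangle-free part of a
partition is bipartite; conversely, a bipartite graph is triangle-free.
-/

theorem IsCograph.induce {α : Type*} {G : SimpleGraph α} (hG : IsCograph G) (s : Set α) :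
    IsCograph (G.induce s) :=
  fun ⟨e⟩ ↦ hG ⟨(Embedding.induce s).comp e⟩

namespace SimpleGraph

variable {V : Type*} {H : SimpleGraph V}

theorem contains_pathGraph_four {a b c d : V} (hab : H.Adj a b) (hbc : H.Adj b c)
    (hcd : H.Adj c d) (hac : ¬ H.Adj a c) (hbd : ¬ H.Adj b d) (had : ¬ H.Adj a d)
    (hac' : a ≠ c) (hbd' : b ≠ d) : Contains H (pathGraph 4) := by
  have had' : a ≠ d := by rintro rfl; exact hac hcd.symm
  refine ⟨⟨⟨![a, b, c, d], fun i j ↦ ?_⟩, fun {i j} ↦ ?_⟩⟩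
  · have := hab.ne; have := hbc.ne; have := hcd.ne
    fin_cases i <;> fin_cases j <;> simp [*, eq_comm]
  · have := hab.symm; have := hbc.symm; have := hcd.symm
    have : ¬ H.Adj c a := fun h ↦ hac h.symm
    have : ¬ H.Adj d b := fun h ↦ hbd h.symm
    have : ¬ H.Adj d a := fun h ↦ had h.symm
    show H.Adj (![a, b, c, d] i) (![a, b, c, d] j) ↔ _
    fin_cases i <;> fin_cases j <;> simp [pathGraph_adj, *]

theorem not_adj_of_neighborSet_eq {r v : V} (h : H.neighborSet v = H.neighborSet r) :
    ¬ H.Adj r v :=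
  fun hrv ↦ H.loopless.irrefl v (show v ∈ H.neighborSet v by rw [h]; exact hrv)

section TriangleFreeCograph

variable (htri : H.CliqueFree 3) (hcog : IsCograph H)
include htri hcog

theorem neighborSet_subset_of_adj_of_adj {x y z : V} (hxz : H.Adj x z) (hzy : H.Adj z y) :
    H.neighborSet x ⊆ H.neighborSet y := by
  have no_triangle {a b c : V} (hab : H.Adj a b) (hbc : H.Adj b c) (hac : a ≠ c) :
      ¬ H.Adj a c :=
    isIndepSet_neighborSet_of_triangleFree _ htri b hab.symm hbc hac
  obtain rfl | hxy := eq_or_ne x y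
  · rfl
  intro w hxw
  by_contra hyw
  obtain rfl | hwz := eq_or_ne w z
  · exact hyw hzy.symm
  -- `w - x - z - y` would be an induced `P₄`
  exact hcog (contains_pathGraph_four hxw.symm hxz hzy (no_triangle hxw.symm hxz hwz)
    (no_triangle hxz hzy hxy) (fun h ↦ hyw h.symm) hwz hxy)

theorem neighborSet_eq_of_adj_of_adj {x y z : V} (hxz : H.Adj x z) (hzy : H.Adj z y) :
    H.neighborSet x = H.neighborSet y :=
  (neighborSet_subset_of_adj_of_adj htri hcog hxz hzy).antisymm
    (neighborSet_subset_of_adj_of_adj htri hcog hzy.symm hxz.symm)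

theorem adj_or_neighborSet_eq_of_reachable {r y : V} (h : H.Reachable y r) :
    H.Adj r y ∨ H.neighborSet y = H.neighborSet r := by
  obtain ⟨p⟩ := h
  induction p with
  | nil => exact Or.inr rfl
  | cons hyv _ ih =>
    rcases ih with hrv | hNv
    · exact Or.inr (neighborSet_eq_of_adj_of_adj htri hcog hyv hrv.symm)
    · exact Or.inl (show _ ∈ H.neighborSet _ by rw [← hNv]; exact hyv.symm)

theorem colorable_two_of_cliqueFree_three : H.Colorable 2 := by
  classical
  let root (v : V) : V := (H.connectedComponentMk v).out
  have root_reachable (v : V) : H.Reachable v (root v) :=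
    (ConnectedComponent.exact (Quot.out_eq _)).symm
  refine (Coloring.mk (fun v ↦ decide (H.Adj (root v) v)) fun {u v} huv ↦ ?_).colorable
  have hroot : root u = root v := congrArg Quot.out (ConnectedComponent.sound huv.reachable)
  simp only [hroot, ne_eq, decide_eq_decide]
  rcases adj_or_neighborSet_eq_of_reachable htri hcog (root_reachable u) with hu | hu <;>
    rcases adj_or_neighborSet_eq_of_reachable htri hcog (root_reachable v) with hv | hv
  · rw [hroot] at hu
    exact absurd huv (isIndepSet_neighborSet_of_triangleFree _ htri _ hu hv huv.ne)
  · simpa [hroot ▸ hu] using not_adj_of_neighborSet_eq hv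
  · simpa [hv] using hroot ▸ not_adj_of_neighborSet_eq hu
  · exact (not_adj_of_neighborSet_eq (hv.trans (hroot ▸ hu).symm) huv).elim

end TriangleFreeCograph

end SimpleGraph

theorem stmt_13_general {α : Type*} (G : SimpleGraph α) (hcog : IsCograph G) :
    Partitionable G ↔
      ∃ A : Set α, ¬ Contains (G.induce A) (pathGraph 3) ∧ (G.induce Aᶜ).Colorable 2 := by
  constructor
  · rintro ⟨A, hA, hAc⟩
    refine ⟨Aᶜ, hAc, ?_⟩
    rw [compl_compl]
    exact colorable_two_of_cliqueFree_three hA (hcog.induce A)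
  · rintro ⟨A, hA, hcol⟩
    refine ⟨Aᶜ, hcol.cliqueFree (by norm_num), ?_⟩
    rwa [compl_compl]

theorem stmt_13 {α : Type*} [Fintype α] (G : SimpleGraph α) (hcog : IsCograph G) :
    Partitionable G ↔
      ∃ A : Set α, ¬ Contains (G.induce A) (pathGraph 3) ∧ (G.induce Aᶜ).Colorable 2 :=
  stmt_13_general G hcog
end
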